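/- arXiv:2401.00841 — 5 statements merged into one kernel-verified Lean document; each statement's English description precedes it below -/
import Mathlib

section
/- Let L be a complete lattice, B a type, and β : B → L a basis. For every monotone map f : L → L, the generator φ_f := {(b, a) : B × L | β b ≤ f a} satisfies Γ_{φ_f}(x) = f(x) for all x : L. -/
section Generator

variable {L : Type*} [CompleteLattice L] {B : Type*}

def generatorOperator (β : B → L) (φ : Set (B × L)) (a : L) : L :=
  sSup (β '' {b : B | ∃ a' : L, (b, a') ∈ φ ∧ a' ≤ a})

def canonicalGenerator (β : B → L) (f : L → L) : Set (B × L) :=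
  {p | β p.1 ≤ f p.2}

variable (β : B → L) {f : L → L}

theorem generatorOperator_canonicalGenerator_le (hf : Monotone f) (x : L) :
    generatorOperator β (canonicalGenerator β f) x ≤ f x :=
  sSup_le <| by
    rintro _ ⟨b, ⟨a', hba', ha'x⟩, rfl⟩
    exact hba'.trans (hf ha'x)

theorem le_generatorOperator_canonicalGenerator
    (hβ : ∀ x : L, x = sSup (β '' {b : B | β b ≤ x})) (x : L) :
    f x ≤ generatorOperator β (canonicalGenerator β f) x := by
  rw [hβ (f x)]
  exact sSup_le_sSup (Set.image_mono fun b hb => ⟨x, hb, le_rfl⟩)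

end Generator

/-- Every monotone map `f` on a complete lattice with basis `β` arises as
`Γ_{φ_f}` for the canonical generator `φ_f = {(b, a) | β b ≤ f a}`. -/
theorem gamma_of_canonical_generator {L : Type*} [CompleteLattice L] {B : Type*}
    (β : B → L) (hβ : ∀ x : L, x = sSup (β '' {b : B | β b ≤ x}))
    (f : L → L) (hf : Monotone f) :
    ∀ x : L,
      sSup (β '' {b : B | ∃ a' : L, (b, a') ∈ {p : B × L | β p.1 ≤ f p.2} ∧ a' ≤ x})
        = f x :=
  fun x => le_antisymm (generatorOperator_canonicalGenerator_le β hf x)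
    (le_generatorOperator_canonicalGenerator β hβ x)
end

section
/- Let L be a complete lattice, B a type, β : B → L a basis, and φ ⊆ B × L a generator. If P ⊆ B is c-closed and φ-closed, then sSup (β '' P) is deflationary: Γ_φ (sSup (β '' P)) ≤ sSup (β '' P). -/
/-- `P` is closed under containment. -/
def IsCClosed {L B : Type*} [CompleteLattice L] (β : B → L) (P : Set B) : Prop :=
  ∀ U : Set B, U ⊆ P → ∀ b : B, β b ≤ sSup (β '' U) → b ∈ P

/-- `P` is closed under the generator `φ`. -/
def IsPhiClosed {L B : Type*} [CompleteLattice L] (β : B → L) (φ : Set (B × L))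
    (P : Set B) : Prop :=
  ∀ b : B, ∀ a : L, (b, a) ∈ φ → {b' : B | β b' ≤ a} ⊆ P → b ∈ P

section

variable {L B : Type*} [CompleteLattice L] {β : B → L} {P : Set B}

theorem IsCClosed.mem_of_le_sSup_image (hc : IsCClosed β P) {b : B}
    (hb : β b ≤ sSup (β '' P)) : b ∈ P :=
  hc P subset_rfl b hb

theorem IsPhiClosed.mem_of_le_sSup_image {φ : Set (B × L)} (hφ : IsPhiClosed β φ P)
    (hc : IsCClosed β P) {b : B} {a : L} (hba : (b, a) ∈ φ) (ha : a ≤ sSup (β '' P)) :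
    b ∈ P :=
  hφ b a hba fun _ hb' => hc.mem_of_le_sSup_image (le_trans hb' ha)

end

theorem sSup_of_closed_is_deflationary_general {L B : Type*} [CompleteLattice L] (β : B → L)
    (φ : Set (B × L)) (P : Set B)
    (hc : IsCClosed β P) (hφ : IsPhiClosed β φ P) :
    sSup (β '' {b : B | ∃ a' : L, (b, a') ∈ φ ∧ a' ≤ sSup (β '' P)}) ≤ sSup (β '' P) :=
  sSup_le_sSup <| Set.image_mono fun _ ⟨_, hba, ha⟩ => hφ.mem_of_le_sSup_image hc hba ha

/-- If `P` is c-closed and φ-closed then `sSup (β '' P)` is deflationary. -/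
theorem sSup_of_closed_is_deflationary {L B : Type*} [CompleteLattice L] (β : B → L)
    (hβ : ∀ x : L, x = sSup (β '' {b : B | β b ≤ x}))
    (φ : Set (B × L)) (P : Set B)
    (hc : IsCClosed β P) (hφ : IsPhiClosed β φ P) :
    sSup (β '' {b : B | ∃ a' : L, (b, a') ∈ φ ∧ a' ≤ sSup (β '' P)}) ≤ sSup (β '' P) :=
  sSup_of_closed_is_deflationary_general β φ P hc hφ
end

section
/- Let L be a complete lattice, B a type, β : B → L a basis, and φ ⊆ B × L a generator. If a : L is deflationary, i.e. Γ_φ(a) ≤ a, then the subset {b : B | β b ≤ a} is both c-closed and φ-closed. -/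
section Basis

variable {L B : Type*} [CompleteLattice L]

def Gamma (β : B → L) (φ : Set (B × L)) (a : L) : L :=
  sSup (β '' {b : B | ∃ a' : L, (b, a') ∈ φ ∧ a' ≤ a})

theorem le_Gamma_of_mem {β : B → L} {φ : Set (B × L)} {a a' : L} {b : B}
    (hmem : (b, a') ∈ φ) (ha' : a' ≤ a) : β b ≤ Gamma β φ a :=
  le_sSup (Set.mem_image_of_mem β ⟨a', hmem, ha'⟩)

theorem isCClosed_setOf_le (β : B → L) (a : L) : IsCClosed β {b | β b ≤ a} :=
  fun _ hU _ hb => hb.trans (sSup_image.trans_le (iSup₂_le hU))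

theorem le_of_setOf_le_subset {β : B → L} (hβ : ∀ x : L, x = sSup (β '' {b : B | β b ≤ x}))
    {x y : L} (h : {b | β b ≤ x} ⊆ {b | β b ≤ y}) : x ≤ y :=
  (hβ x).trans_le (sSup_image.trans_le (iSup₂_le h))

theorem isPhiClosed_setOf_le {β : B → L} (hβ : ∀ x : L, x = sSup (β '' {b : B | β b ≤ x}))
    {φ : Set (B × L)} {a : L} (ha : Gamma β φ a ≤ a) : IsPhiClosed β φ {b | β b ≤ a} :=
  fun _ _ hmem hsub => (le_Gamma_of_mem hmem (le_of_setOf_le_subset hβ hsub)).trans ha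

end Basis

/-- If `a` is deflationary, i.e. `Γ_φ a ≤ a`, then `{b | β b ≤ a}` is
c-closed and φ-closed. -/
theorem downset_of_deflationary_is_closed {L B : Type*} [CompleteLattice L] (β : B → L)
    (hβ : ∀ x : L, x = sSup (β '' {b : B | β b ≤ x}))
    (φ : Set (B × L)) (a : L)
    (ha : sSup (β '' {b : B | ∃ a' : L, (b, a') ∈ φ ∧ a' ≤ a}) ≤ a) :
    IsCClosed β {b : B | β b ≤ a} ∧ IsPhiClosed β φ {b : B | β b ≤ a} :=
  ⟨isCClosed_setOf_le β a, isPhiClosed_setOf_le hβ ha⟩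
end

section
/- Let L be a complete lattice, B a type, β : B → L a basis, and φ ⊆ B × L a generator that is bounded with bound given by a type I and a family α : I → Type. Then for all b : B and a : L: (∃ a' : L, (b, a') ∈ φ ∧ a' ≤ a) if and only if (∃ i : I, ∃ m : α i → {b' : B // β b' ≤ a}, (b, ⨆ z : α i, β (m z).1) ∈ φ). -/
theorem iSup_basis_comp_of_surjective {L B ι : Type*} [CompleteLattice L] {β : B → L} {x : L}
    (hx : x = sSup (β '' {b : B | β b ≤ x})) {s : ι → {b : B // β b ≤ x}}
    (hs : Function.Surjective s) :
    ⨆ z, β (s z).1 = x := by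
  rw [hs.iSup_comp (fun b => β b.1)]
  exact (sSup_image' (f := β)).symm.trans hx.symm

/-- For a bounded generator `φ` with bound `(I, α)`, membership in
`S_{φ,a}` can be expressed in small terms. -/
theorem bounded_generator_small_characterization {L B : Type*} [CompleteLattice L]
    (β : B → L) (hβ : ∀ x : L, x = sSup (β '' {b : B | β b ≤ x}))
    (φ : Set (B × L)) {I : Type*} (α : I → Type*)
    (hbound : ∀ (b : B) (a : L), (b, a) ∈ φ →
      ∃ i : I, ∃ s : α i → {b' : B // β b' ≤ a}, Function.Surjective s) :
    ∀ (b : B) (a : L),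
      (∃ a' : L, (b, a') ∈ φ ∧ a' ≤ a) ↔
      (∃ i : I, ∃ m : α i → {b' : B // β b' ≤ a},
        (b, ⨆ z : α i, β (m z).1) ∈ φ) := by
  intro b a
  constructor
  · rintro ⟨a', hφ, hle⟩
    obtain ⟨i, s, hs⟩ := hbound b a' hφ
    refine ⟨i, fun z => ⟨(s z).1, (s z).2.trans hle⟩, ?_⟩
    rwa [iSup_basis_comp_of_surjective (hβ a') hs]
  · rintro ⟨i, m, hφ⟩
    exact ⟨_, hφ, iSup_le fun z => (m z).2⟩
end

section
/- Let L be a complete lattice, B a type, β : B → L a basis admitting a presentation (J, Y, R), and φ ⊆ B × L a generator bounded with bound (I, α). Let I_φ be the intersection of all subsets of B that are c-closed and φ-closed, and let I_φ^V be the intersection of all subsets P ⊆ B satisfying: (i) for every j : J, if Y j ⊆ P then R_j ⊆ P; and (ii) for every b : B, i : I and m : α i → B, if (b, ⨆ z : α i, β (m z)) ∈ φ and {b' : B | β b' ≤ ⨆ z : α i, β (m z)} ⊆ P, then b ∈ P. Then I_φ = I_φ^V. -/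
/- The two intersections range over the same family of subsets: a presentation turns
c-closure into closure under the rules `Y j ⊆ P → R_j ⊆ P`, and, `β` being a basis, a bound lets
every `a` with `(b, a) ∈ φ` be written as `⨆ z : α i, β (m z)`, with `m` enumerating the basis
elements below `a`. -/

theorem isCClosed_iff_of_presentation {L B J : Type*} [CompleteLattice L] {β : B → L}
    {Y : J → Set B} {R : Set (B × Set B)}
    (hpres : ∀ (b : B) (X : Set B), β b ≤ sSup (β '' X) ↔ ∃ j : J, Y j ⊆ X ∧ (b, Y j) ∈ R)
    {P : Set B} :
    IsCClosed β P ↔ ∀ j : J, Y j ⊆ P → {b : B | (b, Y j) ∈ R} ⊆ P := by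
  constructor
  · intro hP j hYP b hb
    exact hP (Y j) hYP b ((hpres b (Y j)).2 ⟨j, subset_rfl, hb⟩)
  · intro hP U hUP b hb
    obtain ⟨j, hYU, hbR⟩ := (hpres b U).1 hb
    exact hP j (hYU.trans hUP) hbR

theorem eq_iSup_of_surjective_onto_lowerBasis {L B ι : Type*} [CompleteLattice L] {β : B → L}
    {a : L} (hβ : a = sSup (β '' {b : B | β b ≤ a}))
    {s : ι → {b : B // β b ≤ a}} (hs : Function.Surjective s) :
    a = ⨆ z, β (s z) := by
  have hrange : Set.range (fun z => β (s z)) = β '' {b : B | β b ≤ a} := by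
    rw [show (fun z => β (s z)) = β ∘ Subtype.val ∘ s from rfl, Set.range_comp,
      hs.range_comp, Subtype.range_coe_subtype]
  rw [iSup, hrange]
  exact hβ

theorem isPhiClosed_iff_of_bounded {L B I : Type*} [CompleteLattice L] {β : B → L}
    (hβ : ∀ x : L, x = sSup (β '' {b : B | β b ≤ x})) {φ : Set (B × L)} {α : I → Type*}
    (hbound : ∀ (b : B) (a : L), (b, a) ∈ φ →
      ∃ i : I, ∃ s : α i → {b' : B // β b' ≤ a}, Function.Surjective s)
    {P : Set B} :
    IsPhiClosed β φ P ↔ ∀ (b : B) (i : I) (m : α i → B),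
      (b, ⨆ z : α i, β (m z)) ∈ φ → {b' : B | β b' ≤ ⨆ z : α i, β (m z)} ⊆ P → b ∈ P := by
  constructor
  · intro hP b i m hφ hsub
    exact hP b _ hφ hsub
  · intro hP b a hφ hsub
    obtain ⟨i, s, hs⟩ := hbound b a hφ
    have ha := eq_iSup_of_surjective_onto_lowerBasis (hβ a) hs
    rw [ha] at hφ hsub
    exact hP b i (fun z => s z) hφ hsub

/-- With a presentation `(J, Y, R)` of `L` and a bound `(I, α)` for `φ`,
the least c-φ-closed subset `I_φ` coincides with its small version `I_φ^V`. -/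
theorem least_closed_subset_eq_small_version {L B : Type*} [CompleteLattice L]
    (β : B → L) (hβ : ∀ x : L, x = sSup (β '' {b : B | β b ≤ x}))
    {J : Type*} (Y : J → Set B) (R : Set (B × Set B))
    (hpres : ∀ (b : B) (X : Set B),
      β b ≤ sSup (β '' X) ↔ ∃ j : J, Y j ⊆ X ∧ (b, Y j) ∈ R)
    (φ : Set (B × L)) {I : Type*} (α : I → Type*)
    (hbound : ∀ (b : B) (a : L), (b, a) ∈ φ →
      ∃ i : I, ∃ s : α i → {b' : B // β b' ≤ a}, Function.Surjective s) :
    ⋂₀ {P : Set B | IsCClosed β P ∧ IsPhiClosed β φ P} =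
    ⋂₀ {P : Set B |
      (∀ j : J, Y j ⊆ P → {b : B | (b, Y j) ∈ R} ⊆ P) ∧
      (∀ (b : B) (i : I) (m : α i → B),
        (b, ⨆ z : α i, β (m z)) ∈ φ →
        {b' : B | β b' ≤ ⨆ z : α i, β (m z)} ⊆ P → b ∈ P)} := by
  congr 1
  ext P
  exact and_congr (isCClosed_iff_of_presentation hpres) (isPhiClosed_iff_of_bounded hβ hbound)
end
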